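/- arXiv:2004.14828 — 5 statements merged into one kernel-verified Lean document; each statement's English description precedes it below -/
import Mathlib

section
/- Let p be a prime and A ⊆ 𝔽_p with |A| > 1. Then there exists d ∈ 𝔽_p with d ≠ 0 such that g(d·A) ≥ 2p/|A| − 2; equivalently, there exists d ∈ 𝔽_p, d ≠ 0, with |A| · (g(d·A) + 2) ≥ 2p. -/
/-- The largest gap of `A ⊆ 𝔽_p`: the largest `g` such that some translate of the
residues of `{1, …, g}` is disjoint from `A`. -/
noncomputable def gap (p : ℕ) (A : Finset (ZMod p)) : ℕ :=
  sSup {g : ℕ | ∃ t : ZMod p, ∀ i : ℕ, 1 ≤ i → i ≤ g → ((i : ZMod p) + t) ∉ A}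

/-!
Suppose that for every `x ≠ 0` and every `y` some `x * (a - y)`, `a ∈ A`, lies in `{1, …, k}`
(no nonzero dilate of `A` has a gap of length `k`), and let `n = #A`. Picking `y ∉ A`, every
`x ≠ 0` is a quotient `i / (a - y)`, so `p ≤ n k + 1`. For each `y` the polynomial
`∏_{a, i} ((y - a) X + i)` of degree `n k` vanishes on `𝔽_pˣ`, which relates its coefficients
of `X ^ R` and `X ^ (R + p - 1)`; as polynomials in `y` this gives Stepanov's identity
`(∏ (Y - a)) ^ k = Y ^ p V + B` with `deg B ≤ deg V + 1`. Since `Y ^ p` has derivative zero, the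
Wronskian of `V` and `B` is divisible by `(∏ (Y - a)) ^ (k - 1)` and nonzero, and comparing
degrees gives `2 p ≤ n (k + 1)`, which fails for the largest `k` with `n (k + 1) < 2 p`.
-/

open Polynomial Finset

namespace Polynomial

section FiniteField

variable {K : Type*} [Field K] [Fintype K]

theorem X_pow_card_sub_X_dvd_of_forall_eval_eq_zero {ψ : K[X]} (h : ∀ x, ψ.eval x = 0) :
    X ^ Fintype.card K - X ∣ ψ := by
  have hq : 1 < Fintype.card K := Fintype.one_lt_card
  have hM : (X ^ Fintype.card K - X : K[X]).Monic :=
    monic_X_pow_sub (by rw [degree_X]; exact_mod_cast hq)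
  rw [← modByMonic_eq_zero_iff_dvd hM]
  refine eq_zero_of_natDegree_lt_card_of_eval_eq_zero _ Function.injective_id (fun x => ?_) ?_
  · have := congrArg (eval x) (modByMonic_add_div ψ (X ^ Fintype.card K - X))
    simpa [FiniteField.pow_card, h x] using this
  · refine (natDegree_modByMonic_lt _ hM fun h1 => ?_).trans_eq
      (FiniteField.X_pow_card_sub_X_natDegree_eq K hq)
    have := FiniteField.X_pow_card_sub_X_natDegree_eq K hq
    rw [h1, natDegree_one] at this
    omega

/-- Vanishing on `Kˣ` means divisibility by `X ^ (q - 1) - 1`; the two coefficients of `g`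
that see the same coefficient of the quotient then cancel. -/
theorem coeff_add_coeff_eq_zero_of_eval_eq_zero {g : K[X]} {R : ℕ}
    (hR : R + 1 < Fintype.card K) (hg : g.natDegree ≤ R + (Fintype.card K - 1))
    (hvan : ∀ x ≠ 0, g.eval x = 0) :
    g.coeff R + g.coeff (R + (Fintype.card K - 1)) = 0 := by
  set q := Fintype.card K
  have hX : (X ^ q - X : K[X]) = X * (X ^ (q - 1) - 1) := by
    rw [mul_sub, mul_one, ← pow_succ', Nat.sub_add_cancel (by omega)]
  obtain ⟨h, rfl⟩ : X ^ (q - 1) - 1 ∣ g := by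
    rw [← mul_dvd_mul_iff_left X_ne_zero, ← hX]
    refine X_pow_card_sub_X_dvd_of_forall_eval_eq_zero fun x => ?_
    rcases eq_or_ne x 0 with rfl | hx <;> simp [*]
  rcases eq_or_ne h 0 with rfl | hh
  · simp
  have hdeg : h.natDegree ≤ R := by
    have hd : (X ^ (q - 1) - 1 : K[X]).natDegree = q - 1 := by
      simpa using natDegree_X_pow_sub_C (n := q - 1) (r := (1 : K))
    rw [natDegree_mul (ne_zero_of_natDegree_gt (n := 0) (by omega)) hh, hd] at hg
    omega
  rw [sub_mul, one_mul, coeff_sub, coeff_sub, coeff_X_pow_mul', coeff_X_pow_mul',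
    if_neg (by omega), if_pos (by omega), Nat.add_sub_cancel,
    coeff_eq_zero_of_natDegree_lt (p := h) (n := R + (q - 1)) (by omega)]
  ring

end FiniteField

section Wronskian

variable {R : Type*} [CommRing R]

theorem wronskian_pow_succ_right (a b : R[X]) (m : ℕ) :
    wronskian a (b ^ (m + 1)) =
      b ^ m * (C ((m + 1 : ℕ) : R) * a * derivative b - derivative a * b) := by
  rw [wronskian, derivative_pow, Nat.add_sub_cancel]
  ring

theorem wronskian_X_pow_char_mul_eq_zero (p : ℕ) [CharP R p] (a : R[X]) :
    wronskian a (X ^ p * a) = 0 := by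
  rw [wronskian, derivative_mul, derivative_X_pow, CharP.cast_eq_zero, C_0]
  ring

variable {K : Type*} [Field K] {p : ℕ} [CharP K p]

theorem pow_dvd_of_natCast_mul_derivative_eq {P : K[X]} (hP : P.Separable) {m : ℕ}
    (hm : m < p) {V : K[X]} (h : C (m : K) * V * derivative P = derivative V * P) :
    P ^ m ∣ V := by
  induction m generalizing V with
  | zero => simp
  | succ m ih =>
    have hm0 : ((m + 1 : ℕ) : K) ≠ 0 := by
      rw [Ne, CharP.cast_eq_zero_iff K p]
      exact fun hdvd => by have := Nat.le_of_dvd m.succ_pos hdvd; omega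
    obtain ⟨V₁, rfl⟩ : P ∣ V := by
      have hPV : P ∣ C ((m + 1 : ℕ) : K) * V * derivative P := h ▸ dvd_mul_left P _
      exact ((isUnit_C.2 (isUnit_iff_ne_zero.2 hm0)).dvd_mul_left).1
        (hP.dvd_of_dvd_mul_right hPV)
    have h₁ : C (m : K) * V₁ * derivative P = derivative V₁ * P := by
      apply mul_left_cancel₀ hP.ne_zero
      rw [derivative_mul, Nat.cast_succ, map_add, map_one] at h
      linear_combination h
    rw [pow_succ']
    exact mul_dvd_mul_left P (ih (by omega) h₁)

/-- The Wronskian of `V` and `P ^ k` equals that of `V` and `B`, so it has degree at most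
`2 * natDegree V`; it is a multiple of `P ^ (k - 1)`, nonzero because `P ^ k` cannot divide `V`. -/
theorem two_mul_le_natDegree_mul_succ_of_pow_eq {P V B : K[X]} (hP : P.Separable) {k : ℕ}
    (hk : k < p) (hV : V ≠ 0) (hB : B.natDegree ≤ V.natDegree + 1)
    (h : P ^ k = X ^ p * V + B) : 2 * p ≤ P.natDegree * (k + 1) := by
  have hp : 1 < p := by have := CharP.char_ne_one K p; omega
  have hdeg : k * P.natDegree = V.natDegree + p := by
    have hXV : (X ^ p * V).natDegree = V.natDegree + p := by
      rw [natDegree_mul (pow_ne_zero _ X_ne_zero) hV, natDegree_X_pow, add_comm]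
    rw [← natDegree_pow, h, natDegree_add_eq_left_of_natDegree_lt (by omega), hXV]
  rcases k with _ | j
  · rw [zero_mul] at hdeg
    omega
  set E := C ((j + 1 : ℕ) : K) * V * derivative P - derivative V * P
  have hW : P ^ j * E = wronskian V B := by
    rw [← wronskian_pow_succ_right, h, wronskian_add_right, wronskian_X_pow_char_mul_eq_zero,
      zero_add]
  have hE : E ≠ 0 := fun hE => by
    have := natDegree_le_of_dvd (pow_dvd_of_natCast_mul_derivative_eq hP hk
      (sub_eq_zero.1 hE)) hV
    rw [natDegree_pow] at this
    omega
  have hWne : wronskian V B ≠ 0 := hW ▸ mul_ne_zero (pow_ne_zero _ hP.ne_zero) hE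
  have hlow : j * P.natDegree ≤ (wronskian V B).natDegree := by
    rw [← hW, natDegree_mul (pow_ne_zero _ hP.ne_zero) hE, natDegree_pow]
    omega
  have hup := natDegree_wronskian_lt_add hWne
  nlinarith

end Wronskian

theorem natDegree_coeff_prod_le {R ι : Type*} [CommSemiring R] (s : Finset ι) (f : ι → R[X][X])
    (hf : ∀ i ∈ s, ∀ j, ((f i).coeff j).natDegree ≤ j) (j : ℕ) :
    ((∏ i ∈ s, f i).coeff j).natDegree ≤ j := by
  induction s using Finset.cons_induction generalizing j with
  | empty => rw [prod_empty, coeff_one]; split_ifs <;> simp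
  | cons i s hi ih =>
    rw [prod_cons, coeff_mul]
    refine natDegree_sum_le_of_forall_le _ _ fun x hx => natDegree_mul_le.trans ?_
    have := mem_antidiagonal.1 hx
    have := hf i (mem_cons_self i s) x.1
    have := ih (fun i hi => hf i (mem_cons_of_mem hi)) x.2
    omega

end Polynomial

section Covering

variable {K : Type*} [Field K]

/-- Over `𝔽_p`: no nonzero dilate of `A` has a gap of length `k`. -/
def DilatesMeetIcc (A : Finset K) (k : ℕ) : Prop :=
  ∀ x ≠ (0 : K), ∀ y, ∃ a ∈ A, ∃ i ∈ Icc 1 k, x * (a - y) = i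

/-- The polynomial `∏_{a ∈ A, 1 ≤ i ≤ k} ((Y - a) X + i)` in `X` over `K[Y]`. -/
noncomputable def coverPoly (A : Finset K) (k : ℕ) : K[X][X] :=
  ∏ a ∈ A, ∏ i ∈ Icc 1 k, (C (X - C a) * X + C (C (i : K)))

variable {A : Finset K} {k : ℕ}

theorem eval_map_coverPoly (y x : K) :
    ((coverPoly A k).map (evalRingHom y)).eval x =
      ∏ a ∈ A, ∏ i ∈ Icc 1 k, ((y - a) * x + i) := by
  simp [coverPoly, Polynomial.map_prod, eval_prod]

theorem DilatesMeetIcc.eval_map_coverPoly_eq_zero (h : DilatesMeetIcc A k) {x : K} (hx : x ≠ 0)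
    (y : K) : ((coverPoly A k).map (evalRingHom y)).eval x = 0 := by
  obtain ⟨a, ha, i, hi, hai⟩ := h x hx y
  rw [eval_map_coverPoly]
  exact prod_eq_zero ha (prod_eq_zero hi (by linear_combination -hai))

theorem natDegree_coverPoly : (coverPoly A k).natDegree = #A * k := by
  have hlin (a : K) (i : ℕ) : (C (X - C a) * X + C (C (i : K)) : K[X][X]).natDegree = 1 :=
    natDegree_linear (X_sub_C_ne_zero a)
  have hne (a : K) (i : ℕ) : (C (X - C a) * X + C (C (i : K)) : K[X][X]) ≠ 0 := fun h0 => by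
    simpa only [h0, natDegree_zero, zero_ne_one] using hlin a i
  have hinner (a : K) : (∏ i ∈ Icc 1 k, (C (X - C a) * X + C (C (i : K)))).natDegree = k := by
    rw [natDegree_prod _ _ fun i _ => hne a i]
    simp only [hlin, sum_const, Nat.card_Icc, smul_eq_mul, mul_one, Nat.add_sub_cancel]
  rw [coverPoly, natDegree_prod _ _ fun a _ => prod_ne_zero_iff.2 fun i _ => hne a i]
  simp only [hinner, sum_const, smul_eq_mul]

theorem coeff_coverPoly_card_mul :
    (coverPoly A k).coeff (#A * k) = (∏ a ∈ A, (X - C a)) ^ k := by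
  rw [← natDegree_coverPoly, ← leadingCoeff, coverPoly, leadingCoeff_prod, ← prod_pow]
  refine prod_congr rfl fun a _ => ?_
  rw [leadingCoeff_prod, prod_congr rfl fun i _ => leadingCoeff_linear (X_sub_C_ne_zero a),
    prod_const, Nat.card_Icc, Nat.add_sub_cancel]

theorem natDegree_coeff_coverPoly_le (j : ℕ) : ((coverPoly A k).coeff j).natDegree ≤ j := by
  refine natDegree_coeff_prod_le _ _ (fun a _ => natDegree_coeff_prod_le _ _ fun i _ j => ?_) j
  rcases j with _ | _ | j <;> simp [coeff_C, coeff_X]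

end Covering

namespace DilatesMeetIcc

variable {K : Type*} [Field K] {A : Finset K} {k : ℕ}

theorem one_le (h : DilatesMeetIcc A k) : 1 ≤ k := by
  obtain ⟨-, -, i, hi, -⟩ := h 1 one_ne_zero 0
  have := mem_Icc.1 hi
  omega

/-- For `y ∉ A`, every `x ≠ 0` is one of the `#A * k` quotients `i / (a - y)`. -/
theorem card_le_card_mul_add_one [Fintype K] (h : DilatesMeetIcc A k) :
    Fintype.card K ≤ #A * k + 1 := by
  classical
  have hk := h.one_le
  by_cases hA : ∀ y, y ∈ A
  · have : Fintype.card K ≤ #A := card_le_card fun y _ => hA y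
    nlinarith
  push Not at hA
  obtain ⟨y, hy⟩ := hA
  have hsub : univ.erase 0 ⊆ (A ×ˢ Icc 1 k).image fun t => (t.2 : K) / (t.1 - y) := by
    intro x hx
    obtain ⟨a, ha, i, hi, hai⟩ := h x (ne_of_mem_erase hx) y
    have hay : a - y ≠ 0 := sub_ne_zero.2 fun hay => hy (hay ▸ ha)
    exact mem_image.2 ⟨(a, i), mem_product.2 ⟨ha, hi⟩, by rw [← hai]; field_simp⟩
  have := (card_le_card hsub).trans card_image_le
  rw [card_erase_of_mem (mem_univ _), card_univ, card_product, Nat.card_Icc,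
    Nat.add_sub_cancel] at this
  omega

variable {p : ℕ} [Fact p.Prime] {A : Finset (ZMod p)}

/-- The auxiliary polynomial of Stepanov's method. With `R = #A * k - (p - 1)`, the coefficient
of `X ^ R` of `coverPoly A k`, a polynomial of degree at most `R` in `Y`, cancels the top
coefficient `(∏ (Y - a)) ^ k` at every `Y = y`, so their sum is divisible by `Y ^ p - Y`. -/
theorem exists_prod_X_sub_C_pow_eq (h : DilatesMeetIcc A k) (hlow : p ≤ #A * k + 1)
    (hhigh : #A * k + 2 < 2 * p) :
    ∃ V B : (ZMod p)[X], V ≠ 0 ∧ B.natDegree ≤ V.natDegree + 1 ∧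
      (∏ a ∈ A, (X - C a)) ^ k = X ^ p * V + B := by
  set R := #A * k + 1 - p
  set P : (ZMod p)[X] := ∏ a ∈ A, (X - C a)
  have hp := (Fact.out : p.Prime).two_le
  have hvan (y : ZMod p) : (P ^ k + (coverPoly A k).coeff R).eval y = 0 := by
    have := coeff_add_coeff_eq_zero_of_eval_eq_zero (g := (coverPoly A k).map (evalRingHom y))
      (R := R) (by rw [ZMod.card]; omega)
      (natDegree_map_le.trans (by rw [natDegree_coverPoly, ZMod.card]; omega))
      fun x hx => h.eval_map_coverPoly_eq_zero hx y
    rw [ZMod.card, coeff_map, coeff_map, show R + (p - 1) = #A * k by omega,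
      coeff_coverPoly_card_mul] at this
    simpa [add_comm] using this
  obtain ⟨V, hV⟩ := X_pow_card_sub_X_dvd_of_forall_eval_eq_zero hvan
  rw [ZMod.card] at hV
  have hPk : (P ^ k).natDegree = #A * k := by
    rw [natDegree_pow, natDegree_finsetProd_X_sub_C_eq_card, mul_comm]
  have hGR : ((coverPoly A k).coeff R).natDegree ≤ R := natDegree_coeff_coverPoly_le R
  have hsum : (P ^ k + (coverPoly A k).coeff R).natDegree = #A * k := by
    rw [natDegree_add_eq_left_of_natDegree_lt (by omega), hPk]
  have hV0 : V ≠ 0 := by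
    rintro rfl
    rw [mul_zero] at hV
    rw [hV, natDegree_zero] at hsum
    omega
  have hdegV : V.natDegree + p = #A * k := by
    rw [← hsum, hV, natDegree_mul (FiniteField.X_pow_card_sub_X_ne_zero _ (by omega)) hV0,
      FiniteField.X_pow_card_sub_X_natDegree_eq _ (by omega), add_comm]
  refine ⟨V, -(X * V + (coverPoly A k).coeff R), hV0, ?_, by linear_combination hV⟩
  rw [natDegree_neg]
  refine (natDegree_add_le _ _).trans ?_
  rw [natDegree_X_mul hV0]
  omega

theorem two_mul_le_card_mul_succ (h : DilatesMeetIcc A k) (hA : 2 ≤ #A) :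
    2 * p ≤ #A * (k + 1) := by
  by_contra! hlt
  have hlow := h.card_le_card_mul_add_one
  rw [ZMod.card] at hlow
  obtain ⟨V, B, hV, hB, hPVB⟩ := h.exists_prod_X_sub_C_pow_eq hlow (by nlinarith)
  have hsep : (∏ a ∈ A, (X - C a)).Separable :=
    separable_prod_X_sub_C_iff'.2 fun _ _ _ _ hab => hab
  have := two_mul_le_natDegree_mul_succ_of_pow_eq hsep (by nlinarith) hV hB hPVB
  rw [natDegree_finsetProd_X_sub_C_eq_card] at this
  omega

end DilatesMeetIcc

theorem le_gap {p : ℕ} [NeZero p] {A : Finset (ZMod p)} (hA : A.Nonempty) {k : ℕ} {t : ZMod p}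
    (h : ∀ i : ℕ, 1 ≤ i → i ≤ k → (i : ZMod p) + t ∉ A) : k ≤ gap p A := by
  obtain ⟨b, hb⟩ := hA
  refine le_csSup ⟨p, fun g ⟨t', ht'⟩ => ?_⟩ ⟨t, h⟩
  by_contra! hg
  have hv := ZMod.val_lt (b - t' - 1)
  refine ht' ((b - t' - 1).val + 1) (by omega) (by omega) ?_
  rwa [Nat.cast_add, ZMod.natCast_zmod_val, Nat.cast_one, sub_add_cancel, sub_add_cancel]

theorem dilatesMeetIcc_of_gap_lt {p : ℕ} [Fact p.Prime] {A : Finset (ZMod p)} (hA : A.Nonempty)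
    {k : ℕ} (h : ∀ d ≠ 0, gap p (A.image (d * ·)) < k) : DilatesMeetIcc A k := by
  intro x hx y
  by_contra! hno
  refine (h x hx).not_ge (le_gap (hA.image _) (t := x * y) fun i hi1 hik hmem => ?_)
  obtain ⟨a, ha, hxa⟩ := mem_image.1 hmem
  exact hno a ha i (mem_Icc.2 ⟨hi1, hik⟩) (by linear_combination hxa)

theorem stmt_0 (p : ℕ) (hp : p.Prime) (A : Finset (ZMod p)) (hA : 1 < A.card) :
    ∃ d : ZMod p, d ≠ 0 ∧
      A.card * (gap p (A.image (fun a => d * a)) + 2) ≥ 2 * p := by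
  have := Fact.mk hp
  by_contra! h
  set k := (2 * p - 1) / #A - 1
  have hgap (d : ZMod p) (hd : d ≠ 0) : gap p (A.image (fun a => d * a)) < k := by
    have hd' : (gap p (A.image (fun a => d * a)) + 2) * #A ≤ 2 * p - 1 := by
      rw [mul_comm]
      exact Nat.le_sub_one_of_lt (h d hd)
    have := (Nat.le_div_iff_mul_le (by omega)).2 hd'
    omega
  have hk : #A * (k + 1) < 2 * p := by
    have := hgap 1 one_ne_zero
    rw [Nat.sub_add_cancel (by omega)]
    exact (Nat.mul_div_le _ _).trans_lt (by have := hp.pos; omega)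
  exact hk.not_ge <|
    (dilatesMeetIcc_of_gap_lt (card_pos.1 (by omega)) hgap).two_mul_le_card_mul_succ hA
end

section
/- Let p be a prime, A ⊆ 𝔽_p nonempty, and m an integer with 1 ≤ m < p. Let B = {1,…,m} ⊆ 𝔽_p (residues of the integers 1,…,m). Suppose that for every d ∈ 𝔽_p with d ≠ 0 and every t ∈ 𝔽_p there exist a ∈ A and b ∈ B with b = d·a + t (i.e., every non-horizontal line in 𝔽_p² meets A × B). Set k := |A|·m − p + 1. Then there exist polynomials g, h ∈ 𝔽_p[X] with deg g ≤ k and deg h ≤ k such that ∏_{a ∈ A} (X + a)^m = X^p · g(X) + h(X). -/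
/-!
Rédei's method. Put `N = |A| m` and `F = ∏_{a ∈ A} (X + a)^m`, and consider the Rédei polynomial
`R(X, Y) = ∏_{a ∈ A, b ∈ B} (X + aY - b)`. For `d ≠ 0` the hypothesis says that every `t ∈ 𝔽_p`
is a root of `R(X, d)`, so `X^p - X` divides `R(X, d)`; comparing degrees, the coefficient of
`X^i` in `R(X, d)` vanishes for `N - p + 1 < i < p`. As a polynomial in `Y`, that coefficient has
degree at most `N - i < p - 1` and vanishes at the `p - 1` points `d ≠ 0`, so it is zero; its
coefficient of `Y^(N-i)` is the coefficient of `X^i` in `F`. Hence `F` has no monomials of degree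
strictly between `N - p + 1` and `p`, which is the claimed decomposition.
-/

open Polynomial Finset

section ProdXAddC

variable {R ι : Type*} [CommSemiring R] (s : Finset ι) {g : ι → R[X]}

theorem natDegree_prod_X_add_C_le (c : ι → R) : (∏ i ∈ s, (X + C (c i))).natDegree ≤ #s :=
  calc _ ≤ ∑ i ∈ s, (X + C (c i)).natDegree := natDegree_prod_le _ _
    _ ≤ #s • 1 := sum_le_card_nsmul _ _ _ fun i _ =>
      (natDegree_add_le _ _).trans (max_le natDegree_X_le ((natDegree_C _).trans_le zero_le_one))
    _ = #s := by rw [smul_eq_mul, mul_one]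

theorem natDegree_coeff_prod_X_add_C_le (hg : ∀ i ∈ s, (g i).natDegree ≤ 1) (k : ℕ) :
    ((∏ i ∈ s, (X + C (g i))).coeff k).natDegree ≤ #s - k := by
  by_cases hk : k ≤ #s
  · rw [Finset.prod_X_add_C_coeff s g hk]
    refine natDegree_sum_le_of_forall_le _ _ fun t ht => ?_
    obtain ⟨hts, htcard⟩ := mem_powersetCard.1 ht
    calc (∏ i ∈ t, g i).natDegree ≤ ∑ i ∈ t, (g i).natDegree := natDegree_prod_le _ _
      _ ≤ #t • 1 := sum_le_card_nsmul _ _ _ fun i hi => hg i (hts hi)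
      _ = #s - k := by rw [htcard, smul_eq_mul, mul_one]
  · rw [coeff_eq_zero_of_natDegree_lt ((natDegree_prod_X_add_C_le s g).trans_lt (by omega)),
      natDegree_zero]
    exact Nat.zero_le _

theorem coeff_coeff_prod_X_add_C_card_sub (hg : ∀ i ∈ s, (g i).natDegree ≤ 1) (k : ℕ) :
    ((∏ i ∈ s, (X + C (g i))).coeff k).coeff (#s - k) =
      (∏ i ∈ s, (X + C ((g i).coeff 1))).coeff k := by
  by_cases hk : k ≤ #s
  · rw [Finset.prod_X_add_C_coeff s g hk, Finset.prod_X_add_C_coeff s _ hk, finsetSum_coeff]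
    refine sum_congr rfl fun t ht => ?_
    obtain ⟨hts, htcard⟩ := mem_powersetCard.1 ht
    rw [← htcard, ← mul_one #t]
    exact coeff_prod_of_natDegree_le _ _ 1 fun i hi => hg i (hts hi)
  · rw [coeff_eq_zero_of_natDegree_lt ((natDegree_prod_X_add_C_le s g).trans_lt (by omega)),
      coeff_eq_zero_of_natDegree_lt ((natDegree_prod_X_add_C_le s _).trans_lt (by omega)),
      coeff_zero]

end ProdXAddC

theorem coeff_eq_zero_of_X_pow_sub_X_dvd {K : Type*} [Field K] {q : ℕ} (hq : 1 < q) {P : K[X]}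
    (hdvd : X ^ q - X ∣ P) {k : ℕ} (hk : P.natDegree - q + 1 < k) (hkq : k < q) :
    P.coeff k = 0 := by
  obtain ⟨Q, rfl⟩ := hdvd
  rcases eq_or_ne Q 0 with rfl | hQ
  · rw [mul_zero, coeff_zero]
  have hdeg : ((X ^ q - X) * Q).natDegree = q + Q.natDegree := by
    rw [natDegree_mul (FiniteField.X_pow_card_sub_X_ne_zero K hq) hQ,
      FiniteField.X_pow_card_sub_X_natDegree_eq K hq]
  obtain ⟨j, rfl⟩ : ∃ j, k = j + 1 := ⟨k - 1, by omega⟩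
  rw [sub_mul, coeff_sub, coeff_X_pow_mul', if_neg (by omega), coeff_X_mul,
    coeff_eq_zero_of_natDegree_lt (by omega), sub_zero]

theorem exists_eq_X_pow_mul_add_of_coeff_eq_zero {R : Type*} [CommRing R] [Nontrivial R]
    {F : R[X]} {q k : ℕ} (hF : F.natDegree ≤ q + k)
    (hcoeff : ∀ i, k < i → i < q → F.coeff i = 0) :
    ∃ g h : R[X], g.natDegree ≤ k ∧ h.natDegree ≤ k ∧ F = X ^ q * g + h := by
  have hmonic : (X ^ q : R[X]).Monic := monic_X_pow q
  refine ⟨F /ₘ X ^ q, F %ₘ X ^ q, ?_, ?_, (modByMonic_add_div F (X ^ q)).symm.trans (add_comm _ _)⟩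
  · rw [natDegree_divByMonic F hmonic, natDegree_X_pow]
    omega
  · refine natDegree_le_iff_coeff_eq_zero.2 fun i hi => ?_
    by_cases hiq : i < q
    · rw [modByMonic_eq_sub_mul_div F (X ^ q), coeff_sub, coeff_X_pow_mul', if_neg (by omega),
        sub_zero]
      exact hcoeff i (by exact_mod_cast hi) hiq
    · refine coeff_eq_zero_of_degree_lt ((degree_modByMonic_lt F hmonic).trans_le ?_)
      rw [degree_X_pow]
      exact_mod_cast not_lt.1 hiq

section FiniteField

variable {K : Type*} [Field K] [Fintype K]

theorem X_pow_card_sub_X_dvd_of_forall_isRoot {P : K[X]} (hP : ∀ t, P.IsRoot t) :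
    X ^ Fintype.card K - X ∣ P := by
  rcases eq_or_ne P 0 with rfl | hP0
  · exact dvd_zero _
  have hmonic : (X ^ Fintype.card K - X : K[X]).Monic :=
    monic_X_pow_sub (by rw [degree_X]; exact_mod_cast Fintype.one_lt_card)
  rw [← prod_multiset_X_sub_C_of_monic_of_roots_card_eq hmonic (by
      rw [FiniteField.roots_X_pow_card_sub_X, FiniteField.X_pow_card_sub_X_natDegree_eq K
        Fintype.one_lt_card, Finset.card_val, Finset.card_univ]),
    FiniteField.roots_X_pow_card_sub_X, Multiset.prod_X_sub_C_dvd_iff_le_roots hP0]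
  exact (Multiset.le_iff_subset univ.nodup).2 fun t _ => (mem_roots hP0).2 (hP t)

theorem coeff_prod_X_add_C_eq_zero_of_forall_exists_eq {ι : Type*} (s : Finset ι) (a b : ι → K)
    (hline : ∀ d : K, d ≠ 0 → ∀ t : K, ∃ i ∈ s, b i = d * a i + t) {k : ℕ}
    (hk : #s - Fintype.card K + 1 < k) (hkq : k < Fintype.card K) :
    (∏ i ∈ s, (X + C (a i))).coeff k = 0 := by
  classical
  -- `∏ (X + C (g i))` is the Rédei polynomial `∏ (X + a Y - b)`, as a polynomial in `X` over `K[Y]`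
  set g : ι → K[X] := fun i => C (a i) * X - C (b i)
  have hg : ∀ i ∈ s, (g i).natDegree ≤ 1 := fun i _ =>
    (natDegree_sub_le _ _).trans (max_le ((natDegree_C_mul_le _ _).trans natDegree_X_le) (by simp))
  set σ := (∏ i ∈ s, (X + C (g i))).coeff k
  have hσ_eval : ∀ d ∈ univ.erase (0 : K), σ.eval d = 0 := by
    intro d hd
    have hspec : σ.eval d = (∏ i ∈ s, (X + C (a i * d - b i))).coeff k := by
      rw [← coe_evalRingHom, ← coeff_map, Polynomial.map_prod]
      simp [g]
    rw [hspec]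
    refine coeff_eq_zero_of_X_pow_sub_X_dvd Fintype.one_lt_card
      (X_pow_card_sub_X_dvd_of_forall_isRoot fun t => ?_)
      (lt_of_le_of_lt (by have := natDegree_prod_X_add_C_le s fun i => a i * d - b i; omega) hk)
      hkq
    obtain ⟨i, hi, hb⟩ := hline d (ne_of_mem_erase hd) t
    rw [IsRoot, eval_prod]
    refine prod_eq_zero hi ?_
    rw [eval_add, eval_X, eval_C, hb]
    ring
  have hσ : σ = 0 := by
    refine eq_zero_of_natDegree_lt_card_of_eval_eq_zero' σ _ hσ_eval ?_
    rw [card_erase_of_mem (mem_univ _), card_univ]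
    have : σ.natDegree ≤ #s - k := natDegree_coeff_prod_X_add_C_le s hg k
    omega
  calc (∏ i ∈ s, (X + C (a i))).coeff k = (∏ i ∈ s, (X + C ((g i).coeff 1))).coeff k := by
        simp [g]
    _ = σ.coeff (#s - k) := (coeff_coeff_prod_X_add_C_card_sub s hg k).symm
    _ = 0 := by rw [hσ, coeff_zero]

end FiniteField

theorem exists_eq_X_pow_card_mul_add_of_forall_exists_eq {K ι : Type*} [Field K] [Fintype K]
    (s : Finset ι) (a b : ι → K) (hline : ∀ d : K, d ≠ 0 → ∀ t : K, ∃ i ∈ s, b i = d * a i + t) :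
    ∃ g h : K[X], g.natDegree ≤ #s - Fintype.card K + 1 ∧ h.natDegree ≤ #s - Fintype.card K + 1 ∧
      ∏ i ∈ s, (X + C (a i)) = X ^ Fintype.card K * g + h :=
  exists_eq_X_pow_mul_add_of_coeff_eq_zero
    (by have := natDegree_prod_X_add_C_le s a; omega)
    fun _ hk hkq => coeff_prod_X_add_C_eq_zero_of_forall_exists_eq s a b hline hk hkq

theorem stmt_4_general (p : ℕ) (hp : p.Prime) (A : Finset (ZMod p))
    (m : ℕ)
    (hline : ∀ d : ZMod p, d ≠ 0 → ∀ t : ZMod p,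
      ∃ a ∈ A, ∃ b : ℕ, 1 ≤ b ∧ b ≤ m ∧ (b : ZMod p) = d * a + t) :
    ∃ g h : Polynomial (ZMod p),
      g.natDegree ≤ A.card * m - p + 1 ∧ h.natDegree ≤ A.card * m - p + 1 ∧
      ∏ a ∈ A, (X + C a) ^ m = X ^ p * g + h := by
  have : Fact p.Prime := ⟨hp⟩
  have hcard : #(A ×ˢ Icc 1 m) = #A * m := by rw [card_product, Nat.card_Icc, Nat.add_sub_cancel]
  have hprod : ∏ z ∈ A ×ˢ Icc 1 m, (X + C z.1) = ∏ a ∈ A, (X + C a) ^ m := by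
    rw [prod_product]
    refine prod_congr rfl fun a _ => ?_
    rw [prod_const (X + C a), Nat.card_Icc, Nat.add_sub_cancel]
  have := exists_eq_X_pow_card_mul_add_of_forall_exists_eq (A ×ˢ Icc 1 m) Prod.fst
    (fun z => (z.2 : ZMod p)) fun d hd t => by
      obtain ⟨a, ha, b, hb1, hbm, hb⟩ := hline d hd t
      exact ⟨(a, b), mem_product.2 ⟨ha, mem_Icc.2 ⟨hb1, hbm⟩⟩, hb⟩
  rwa [hcard, hprod, ZMod.card] at this

theorem stmt_4 (p : ℕ) (hp : p.Prime) (A : Finset (ZMod p)) (hA : A.Nonempty)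
    (m : ℕ) (hm1 : 1 ≤ m) (hmp : m < p)
    (hline : ∀ d : ZMod p, d ≠ 0 → ∀ t : ZMod p,
      ∃ a ∈ A, ∃ b : ℕ, 1 ≤ b ∧ b ≤ m ∧ (b : ZMod p) = d * a + t) :
    ∃ g h : Polynomial (ZMod p),
      g.natDegree ≤ A.card * m - p + 1 ∧ h.natDegree ≤ A.card * m - p + 1 ∧
      ∏ a ∈ A, (X + C a) ^ m = X ^ p * g + h :=
  stmt_4_general p hp A m hline
end

section
/- Let p be a prime, g, h ∈ 𝔽_p[X], and set f = X^p · g + h. Let a ∈ 𝔽_p and let e ≥ 1 be an integer. If (X + a)^e divides f, then (X + a)^{e−1} divides h′·g − h·g′, where ′ denotes the formal derivative. -/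
open Polynomial

theorem stmt_5 (p : ℕ) (hp : p.Prime) (g h : Polynomial (ZMod p))
    (f : Polynomial (ZMod p)) (hf : f = X ^ p * g + h)
    (a : ZMod p) (e : ℕ) (he : 1 ≤ e) (hdvd : (X + C a) ^ e ∣ f) :
    (X + C a) ^ (e - 1) ∣ derivative h * g - h * derivative g := by
  obtain ⟨q, hq⟩ := hdvd
  have hXp : derivative (X ^ p : Polynomial (ZMod p)) = 0 := by
    rw [derivative_X_pow]
    simp [ZMod.natCast_self]
  have hf' : derivative f = X ^ p * derivative g + derivative h := by
    rw [hf]; rw [derivative_add, derivative_mul, hXp]; ring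
  have key : derivative h * g - h * derivative g
      = derivative f * g - f * derivative g := by
    rw [hf', hf]; ring
  rw [key]
  have hdf : (X + C a) ^ (e - 1) ∣ derivative f := by
    rw [hq, derivative_mul, derivative_pow]
    simp only [derivative_add, derivative_X, derivative_C, add_zero]
    exact dvd_add (Dvd.dvd.mul_right ⟨C (e : ZMod p), by ring⟩ _)
      ((pow_dvd_pow _ (by omega)).mul_right _)
  have hff : (X + C a) ^ (e - 1) ∣ f := by
    rw [hq]; exact (pow_dvd_pow _ (by omega)).mul_right _
  exact dvd_sub (hdf.mul_right _) (hff.mul_right _)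
end

section
/- Let p be a prime and let g, h ∈ 𝔽_p[X] with g ≠ 0, deg g < p, and deg h < p. If h′·g = h·g′ (where ′ denotes the formal derivative), then there exists c ∈ 𝔽_p such that h = c·g. (In particular, g and h have the same roots with multiplicity in an algebraic closure of 𝔽_p.) -/
open Polynomial

lemma aux_const (p : ℕ) (hp : p.Prime) (f : Polynomial (ZMod p))
    (hdeg : f.natDegree < p) (hder : derivative f = 0) :
    f = C (f.coeff 0) := by
  haveI := Fact.mk hp
  rcases eq_or_ne f.natDegree 0 with h0 | h0
  · exact (Polynomial.eq_C_of_natDegree_eq_zero h0).trans rfl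
  · exfalso
    have hf : f ≠ 0 := fun h => h0 (by simp [h])
    have := Polynomial.coeff_derivative f (f.natDegree - 1)
    rw [hder] at this
    have hn : f.natDegree - 1 + 1 = f.natDegree := Nat.succ_pred_eq_of_pos (Nat.pos_of_ne_zero h0)
    rw [hn] at this
    have hlc : f.coeff f.natDegree ≠ 0 := Polynomial.leadingCoeff_ne_zero.mpr hf
    have hcast : ((f.natDegree - 1 + 1 : ℕ) : ZMod p) ≠ 0 := by
      rw [hn, Ne, ZMod.natCast_eq_zero_iff]
      exact Nat.not_dvd_of_pos_of_lt (Nat.pos_of_ne_zero h0) hdeg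
    simp at this
    rcases this with h | h
    · exact hf h
    · exact hcast (by push_cast; exact_mod_cast h)

theorem stmt_6 (p : ℕ) (hp : p.Prime) (g h : Polynomial (ZMod p))
    (hg : g ≠ 0) (hgdeg : g.natDegree < p) (hhdeg : h.natDegree < p)
    (heq : derivative h * g = h * derivative g) :
    ∃ c : ZMod p, h = C c * g := by
  haveI := Fact.mk hp
  set d := GCDMonoid.gcd h g with hd
  have hdne : d ≠ 0 := gcd_ne_zero_of_right hg
  set g1 := g / d with hg1def
  set h1 := h / d with hh1def
  have hgd : d * g1 = g := EuclideanDomain.mul_div_cancel' hdne (gcd_dvd_right h g)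
  have hhd : d * h1 = h := EuclideanDomain.mul_div_cancel' hdne (gcd_dvd_left h g)
  have hcop : IsCoprime h1 g1 := isCoprime_div_gcd_div_gcd hg
  have hg1 : g1 ≠ 0 := right_div_gcd_ne_zero hg
  have key : derivative h1 * g1 = h1 * derivative g1 := by
    have h2 : d * d * (derivative h1 * g1) = d * d * (h1 * derivative g1) := by
      have h3 := heq
      rw [← hgd, ← hhd, derivative_mul, derivative_mul] at h3
      ring_nf at h3 ⊢
      linear_combination h3
    exact mul_left_cancel₀ (mul_ne_zero hdne hdne) h2
  have hdvd : g1 ∣ derivative g1 :=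
    hcop.symm.dvd_of_dvd_mul_left ⟨derivative h1, by linear_combination -key⟩
  have hg1d : derivative g1 = 0 := by
    by_contra hz
    have hn0 : g1.natDegree ≠ 0 := by
      intro h0
      rw [Polynomial.eq_C_of_natDegree_eq_zero h0] at hz
      simp at hz
    exact absurd (Polynomial.natDegree_le_of_dvd hdvd hz)
      (Nat.not_le.mpr (Polynomial.natDegree_derivative_lt hn0))
  have hh1d : derivative h1 = 0 := by
    have hz : derivative h1 * g1 = 0 := by rw [key, hg1d, mul_zero]
    exact (mul_eq_zero.mp hz).resolve_right hg1
  have hg1deg : g1.natDegree < p :=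
    lt_of_le_of_lt (Polynomial.natDegree_le_of_dvd ⟨d, by rw [← hgd]; ring⟩ hg) hgdeg
  have hh1deg : h1.natDegree < p := by
    rcases eq_or_ne h1 0 with h0 | h0
    · simpa [h0] using hp.pos
    · have hh : h ≠ 0 := by rw [← hhd]; exact mul_ne_zero hdne h0
      exact lt_of_le_of_lt (Polynomial.natDegree_le_of_dvd ⟨d, by rw [← hhd]; ring⟩ hh) hhdeg
  have hgC := aux_const p hp g1 hg1deg hg1d
  have hhC := aux_const p hp h1 hh1deg hh1d
  have ha : g1.coeff 0 ≠ 0 := by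
    intro h0
    rw [hgC, h0, map_zero] at hg1
    exact hg1 rfl
  refine ⟨h1.coeff 0 * (g1.coeff 0)⁻¹, ?_⟩
  rw [← hhd, ← hgd, hgC, hhC, mul_comm (C _), mul_assoc, ← C_mul, coeff_C_zero,
    coeff_C_zero, mul_comm (g1.coeff 0), mul_assoc, inv_mul_cancel₀ ha, mul_one]
end

section
/- Let K be a field of prime characteristic p and let g, h ∈ K[X] satisfy h′·g = h·g′, where ′ denotes the formal derivative. Suppose α ∈ K is a root of g of multiplicity exactly d, where 1 ≤ d < p (i.e., (X − α)^d divides g but (X − α)^{d+1} does not). Then h(α) = 0, i.e., (X − α) divides h. -/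
open Polynomial

theorem stmt_7 (K : Type*) [Field K] (p : ℕ) (hp : p.Prime) [CharP K p]
    (g h : Polynomial K) (heq : derivative h * g = h * derivative g)
    (α : K) (d : ℕ) (hd1 : 1 ≤ d) (hdp : d < p)
    (hdvd : (X - C α) ^ d ∣ g) (hndvd : ¬ (X - C α) ^ (d + 1) ∣ g) :
    h.eval α = 0 := by
  obtain ⟨u, hu⟩ := hdvd
  have huα : u.eval α ≠ 0 := by
    intro h0
    apply hndvd
    obtain ⟨v, hv⟩ := dvd_iff_isRoot.mpr h0
    exact ⟨v, by rw [hu, hv]; ring⟩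
  obtain ⟨e, rfl⟩ : ∃ e, d = e + 1 := ⟨d - 1, (Nat.succ_pred_eq_of_pos hd1).symm⟩
  have key : (X - C α) ^ e * (derivative h * ((X - C α) * u))
      = (X - C α) ^ e * (h * (C ((e + 1 : ℕ) : K) * u + (X - C α) * derivative u)) := by
    have := heq
    rw [hu, derivative_mul, derivative_pow, derivative_X_sub_C] at this
    calc (X - C α) ^ e * (derivative h * ((X - C α) * u))
        = derivative h * ((X - C α) ^ (e + 1) * u) := by ring
      _ = h * (C ((e + 1 : ℕ) : K) * (X - C α) ^ (e + 1 - 1) * 1 * u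
            + (X - C α) ^ (e + 1) * derivative u) := this
      _ = (X - C α) ^ e * (h * (C ((e + 1 : ℕ) : K) * u + (X - C α) * derivative u)) := by
          simp only [Nat.add_sub_cancel]; ring
  have key2 := mul_left_cancel₀ (pow_ne_zero e (X_sub_C_ne_zero α)) key
  have hev := congrArg (eval α) key2
  simp only [eval_mul, eval_add, eval_sub, eval_X, eval_C, sub_self, zero_mul, mul_zero,
    add_zero, zero_add] at hev
  have hdK : ((e + 1 : ℕ) : K) ≠ 0 := by
    rw [Ne, CharP.cast_eq_zero_iff K p]
    exact Nat.not_dvd_of_pos_of_lt (Nat.succ_pos e) hdp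
  rcases mul_eq_zero.mp hev.symm with h1 | h1
  · exact h1
  · exact absurd h1 (mul_ne_zero hdK huα)
end
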